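/- arXiv:2503.06880 — 2 statements merged into one kernel-verified Lean document; each statement's English description precedes it below -/
import Mathlib

section
/- Every non-reflexive Banach space X admits a bounded biorthogonal system ((e_i),(f_j)) (with f_i(e_j) = δ_{ij}, both sequences bounded) such that either sup_n ‖∑_{i≤n} e_i‖ < ∞ or sup_n ‖∑_{i≤n} f_i‖ < ∞. Conversely, if X is reflexive, then no bounded biorthogonal system has uniformly bounded partial sums of either sequence. -/
/-!
If `X` is not reflexive, pick `F ∈ X** \ J(X)`. As `J(X)` is closed, `|t| d ≤ ‖t • F + J y‖`
for some `d > 0`, and Helly's theorem (finitely many equations `gᵢ x = cᵢ` have a solution of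
norm about `M` as soon as `|∑ aᵢ cᵢ| ≤ M ‖∑ aᵢ gᵢ‖`) lets one choose, one pair at a time, James's
sequence: `xₙ` bounded and `fₙ` in the unit ball with `fᵢ xⱼ = θ` for `i ≤ j` and `0` for
`i > j`. The differences `xⱼ₊₁ - xⱼ` and the functionals `θ⁻¹ fᵢ₊₁` are then biorthogonal,
and the partial sums of the former are `xₙ - x₀`.

If `X` is reflexive and the partial sums of `e` (resp. `f`) are bounded, they form together
with `f` (resp. `e`) a bounded pair `φₘ, yₙ` with `φₘ yₙ = 1` for `m < n` (resp. `n < m`) and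
`0` otherwise, whose two iterated limits are `1` and `0`. But along an ultrafilter both
iterated limits equal `g x`, where `g` is the weak-* limit of `φₘ` (Banach–Alaoglu) and `J x`
the weak-* limit of `J yₙ`.
-/

open Filter Topology NormedSpace

theorem Module.Dual.exists_forall_apply_eq_of_sum_smul_eq_zero {K V ι : Type*} [Field K]
    [AddCommGroup V] [Module K V] [Fintype ι] (g : ι → Module.Dual K V) (c : ι → K)
    (h : ∀ a : ι → K, ∑ i, a i • g i = 0 → ∑ i, a i * c i = 0) :
    ∃ x, ∀ i, g i x = c i := by
  classical
  by_contra! hne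
  have hc : c ∉ LinearMap.range (LinearMap.pi g) := by
    rintro ⟨x, hx⟩
    obtain ⟨i, hi⟩ := hne x
    exact hi (congrFun hx i)
  obtain ⟨φ, hφc, hφ⟩ := Submodule.exists_dual_map_eq_bot_of_notMem hc inferInstance
  set a : ι → K := fun i => φ fun j => if i = j then 1 else 0
  have hφ_apply : ∀ v, φ v = ∑ i, a i * v i := fun v => by
    simp only [LinearMap.pi_apply_eq_sum_univ φ v, smul_eq_mul, a, mul_comm]
  have hrel : ∑ i, a i • g i = 0 := by
    ext x
    have hx : φ (LinearMap.pi g x) = 0 := by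
      rw [← Submodule.mem_bot K, ← hφ]
      exact Submodule.mem_map_of_mem (LinearMap.mem_range_self _ x)
    simpa [hφ_apply] using hx
  exact hφc (by rw [hφ_apply]; exact h a hrel)

section Normed

variable {X : Type*} [NormedAddCommGroup X] [NormedSpace ℝ X]

theorem norm_mk_iInf_ker_le {ι : Type*} [Fintype ι] (g : ι → StrongDual ℝ X) {M : ℝ}
    (hM : 0 ≤ M) (x₀ : X) (h : ∀ a : ι → ℝ, |∑ i, a i * g i x₀| ≤ M * ‖∑ i, a i • g i‖) :
    ‖(Submodule.Quotient.mk x₀ : X ⧸ ⨅ i, LinearMap.ker (g i : X →ₗ[ℝ] ℝ))‖ ≤ M := by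
  set K := ⨅ i, LinearMap.ker (g i : X →ₗ[ℝ] ℝ)
  obtain ⟨φ, hφ_norm, hφx₀⟩ := exists_dual_vector'' ℝ (Submodule.Quotient.mk x₀ : X ⧸ K)
  -- the norming functional of `x₀ + K` vanishes on `K`, so it is a combination of the `g i`
  set ψ : StrongDual ℝ X := φ ∘L K.mkQL
  have hker : K ≤ LinearMap.ker (ψ : X →ₗ[ℝ] ℝ) :=
    fun x hx => by simp [ψ, (Submodule.Quotient.mk_eq_zero K).2 hx]
  obtain ⟨a, ha⟩ :=
    (Submodule.mem_span_range_iff_exists_fun ℝ).1 (mem_span_of_iInf_ker_le_ker hker)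
  have hψ : ∑ i, a i • g i = ψ := ContinuousLinearMap.coe_injective (by push_cast; exact ha)
  have hψ_norm : ‖ψ‖ ≤ 1 := ψ.opNorm_le_bound zero_le_one fun x =>
    calc ‖φ (Submodule.Quotient.mk x)‖ ≤ 1 * ‖(Submodule.Quotient.mk x : X ⧸ K)‖ :=
          (φ.le_opNorm _).trans (by gcongr)
      _ ≤ 1 * ‖x‖ := by gcongr; exact Submodule.Quotient.norm_mk_le K x
  calc ‖(Submodule.Quotient.mk x₀ : X ⧸ K)‖ = ψ x₀ := by simpa [ψ] using hφx₀.symm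
    _ = ∑ i, a i * g i x₀ := by simp [← hψ]
    _ ≤ M * ‖∑ i, a i • g i‖ := (le_abs_self _).trans (h a)
    _ ≤ M := by rw [hψ]; exact mul_le_of_le_one_right hM hψ_norm

theorem exists_norm_lt_forall_apply_eq {ι : Type*} [Fintype ι] (g : ι → StrongDual ℝ X)
    (c : ι → ℝ) {M ε : ℝ} (hM : 0 ≤ M) (hε : 0 < ε)
    (h : ∀ a : ι → ℝ, |∑ i, a i * c i| ≤ M * ‖∑ i, a i • g i‖) :
    ∃ x : X, ‖x‖ < M + ε ∧ ∀ i, g i x = c i := by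
  obtain ⟨x₀, hx₀ : ∀ i, g i x₀ = c i⟩ :=
    Module.Dual.exists_forall_apply_eq_of_sum_smul_eq_zero (fun i => (g i : X →ₗ[ℝ] ℝ)) c
      fun a ha => by
        have hzero : ∑ i, a i • g i = 0 :=
          ContinuousLinearMap.coe_injective (by push_cast; exact ha)
        simpa [hzero] using h a
  obtain ⟨x, hx, hx_norm⟩ := Submodule.Quotient.norm_mk_lt
    (Submodule.Quotient.mk x₀ : X ⧸ ⨅ i, LinearMap.ker (g i : X →ₗ[ℝ] ℝ)) hε
  have hx₀_norm := norm_mk_iInf_ker_le g hM x₀ (by simpa only [hx₀] using h)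
  refine ⟨x, by linarith, fun i => ?_⟩
  have hsub := Submodule.mem_iInf _ |>.1 ((Submodule.Quotient.eq _).1 hx) i
  simpa [sub_eq_zero, hx₀] using hsub

theorem exists_norm_lt_forall_apply_eq_doubleDual {ι : Type*} [Fintype ι]
    (F : StrongDual ℝ (StrongDual ℝ X)) (f : ι → StrongDual ℝ X) {ε : ℝ} (hε : 0 < ε) :
    ∃ x : X, ‖x‖ < ‖F‖ + ε ∧ ∀ i, f i x = F (f i) :=
  exists_norm_lt_forall_apply_eq f (fun i => F (f i)) (norm_nonneg F) hε fun a => by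
    simpa [map_sum] using F.le_opNorm (∑ i, a i • f i)

theorem Submodule.exists_pos_mul_abs_le_norm_smul_add {S : Submodule ℝ X}
    (hS : IsClosed (S : Set X)) {F : X} (hF : F ∉ S) :
    ∃ d > 0, ∀ (t : ℝ), ∀ s ∈ S, |t| * d ≤ ‖t • F + s‖ := by
  refine ⟨_, (hS.notMem_iff_infDist_pos ⟨0, S.zero_mem⟩).1 hF, fun t s hs => ?_⟩
  rcases eq_or_ne t 0 with rfl | ht
  · simp
  have hdist := Metric.infDist_le_dist_of_mem (x := F) (S.neg_mem (S.smul_mem t⁻¹ hs))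
  calc |t| * Metric.infDist F S ≤ |t| * ‖F - -(t⁻¹ • s)‖ := by
        rw [← dist_eq_norm]; gcongr
    _ = ‖t • F + s‖ := by
        rw [← Real.norm_eq_abs, ← norm_smul, sub_neg_eq_add, smul_add, smul_inv_smul₀ ht]

theorem exists_pos_mul_abs_le_norm_smul_add_inclusionInDoubleDual [CompleteSpace X]
    (hX : ¬ Function.Surjective (inclusionInDoubleDual ℝ X)) :
    ∃ (F : StrongDual ℝ (StrongDual ℝ X)) (d : ℝ), 0 < d ∧
      ∀ (t : ℝ) (y : X), |t| * d ≤ ‖t • F + inclusionInDoubleDual ℝ X y‖ := by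
  obtain ⟨F, hF⟩ := not_forall.1 hX
  have hJ : Isometry (inclusionInDoubleDualLi ℝ (E := X)) := (inclusionInDoubleDualLi ℝ).isometry
  obtain ⟨d, hd, hdF⟩ := Submodule.exists_pos_mul_abs_le_norm_smul_add
    (S := LinearMap.range (inclusionInDoubleDual ℝ X : X →ₗ[ℝ] _))
    (by exact hJ.isClosedEmbedding.isClosed_range) (F := F) fun ⟨y, hy⟩ => hF ⟨y, hy⟩
  exact ⟨F, d, hd, fun t y => hdF t _ (LinearMap.mem_range_self _ y)⟩

theorem exists_norm_lt_one_apply_eq_half {ι : Type*} [Fintype ι]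
    {F : StrongDual ℝ (StrongDual ℝ X)} {d : ℝ} (hd : 0 ≤ d)
    (hF : ∀ (t : ℝ) (y : X), |t| * d ≤ ‖t • F + inclusionInDoubleDual ℝ X y‖) (x : ι → X) :
    ∃ f : StrongDual ℝ X, ‖f‖ < 1 ∧ F f = d / 2 ∧ ∀ i, f (x i) = 0 := by
  obtain ⟨f, hf_norm, hf⟩ := exists_norm_lt_forall_apply_eq
    (fun o : Option ι => o.elim F fun i => inclusionInDoubleDual ℝ X (x i))
    (fun o => o.elim (d / 2) fun _ => 0) (by norm_num : (0 : ℝ) ≤ 1 / 2)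
    (by norm_num : (0 : ℝ) < 1 / 2) fun a => by
      have hbound := hF (a none) (∑ i, a (some i) • x i)
      simp only [Fintype.sum_option, Option.elim, map_sum, map_smul] at hbound ⊢
      rw [Finset.sum_eq_zero fun i _ => mul_zero _, add_zero, abs_mul,
        abs_of_nonneg (div_nonneg hd zero_le_two)]
      linarith
  exact ⟨f, by linarith, hf none, fun i => hf (some i)⟩

theorem exists_seq_apply_eq_ite_le_of_not_surjective [CompleteSpace X]
    (hX : ¬ Function.Surjective (inclusionInDoubleDual ℝ X)) :
    ∃ (θ B : ℝ) (x : ℕ → X) (f : ℕ → StrongDual ℝ X), 0 < θ ∧ (∀ n, ‖x n‖ ≤ B) ∧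
      (∀ n, ‖f n‖ ≤ 1) ∧ ∀ i j, f i (x j) = if i ≤ j then θ else 0 := by
  obtain ⟨F, d, hd, hF⟩ := exists_pos_mul_abs_le_norm_smul_add_inclusionInDoubleDual hX
  set θ := d / 2
  let P : X × StrongDual ℝ X → Prop := fun p =>
    ‖p.1‖ ≤ ‖F‖ + 1 ∧ ‖p.2‖ ≤ 1 ∧ F p.2 = θ ∧ p.2 p.1 = θ
  let r : X × StrongDual ℝ X → X × StrongDual ℝ X → Prop := fun p q =>
    q.2 p.1 = 0 ∧ p.2 q.1 = θ
  -- a new `fₙ` kills the earlier `xₖ` and has `F fₙ = θ`, which makes room for an `xₙ` on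
  -- which `fₙ` and all earlier `fₖ` equal `θ`
  have hstep : ∀ s : Finset (X × StrongDual ℝ X), (∀ p ∈ s, P p) →
      ∃ q, P q ∧ ∀ p ∈ s, r p q := by
    intro s hs
    obtain ⟨f, hf_norm, hFf, hf⟩ := exists_norm_lt_one_apply_eq_half hd.le hF fun p : s => p.1.1
    obtain ⟨x, hx_norm, hx⟩ := exists_norm_lt_forall_apply_eq_doubleDual F
      (fun o : Option s => o.elim f fun p => p.1.2) one_pos
    refine ⟨(x, f), ⟨hx_norm.le, hf_norm.le, hFf, (hx none).trans hFf⟩,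
      fun p hp => ⟨hf ⟨p, hp⟩, (hx (some ⟨p, hp⟩)).trans (hs p hp).2.2.1⟩⟩
  obtain ⟨q, hqP, hqr⟩ := exists_seq_of_forall_finset_exists P r hstep
  refine ⟨θ, ‖F‖ + 1, fun n => (q n).1, fun n => (q n).2, half_pos hd, fun n => (hqP n).1,
    fun n => (hqP n).2.1, fun i j => ?_⟩
  rcases lt_trichotomy i j with hij | rfl | hij
  · simpa [hij.le] using (hqr i j hij).2
  · simpa using (hqP i).2.2.2
  · simpa [hij.not_ge] using (hqr j i hij).1

theorem exists_biorthogonal_of_apply_eq_ite_le {θ B : ℝ} {x : ℕ → X}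
    {f : ℕ → StrongDual ℝ X} (hθ : 0 < θ) (hx : ∀ n, ‖x n‖ ≤ B) (hf : ∀ n, ‖f n‖ ≤ 1)
    (hfx : ∀ i j, f i (x j) = if i ≤ j then θ else 0) :
    ∃ (e : ℕ → X) (g : ℕ → StrongDual ℝ X) (C : ℝ),
      (∀ i, ‖e i‖ ≤ C) ∧ (∀ j, ‖g j‖ ≤ C) ∧ (∀ i j, g i (e j) = if i = j then 1 else 0) ∧
      ∃ M : ℝ, ∀ n, ‖∑ i ∈ Finset.range n, e i‖ ≤ M := by
  have hdiff : ∀ m n, ‖x m - x n‖ ≤ 2 * B := fun m n => by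
    linarith [norm_sub_le (x m) (x n), hx m, hx n]
  have hθ_inv : 0 ≤ θ⁻¹ := inv_nonneg.2 hθ.le
  refine ⟨fun j => x (j + 1) - x j, fun i => θ⁻¹ • f (i + 1), max (2 * B) θ⁻¹,
    fun j => (hdiff _ _).trans (le_max_left _ _), fun i => ?_, fun i j => ?_, 2 * B,
    fun n => ?_⟩
  · calc ‖θ⁻¹ • f (i + 1)‖ = θ⁻¹ * ‖f (i + 1)‖ := by
          rw [norm_smul, Real.norm_of_nonneg hθ_inv]
      _ ≤ θ⁻¹ := mul_le_of_le_one_right hθ_inv (hf _)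
      _ ≤ _ := le_max_right _ _
  · simp only [smul_apply, map_sub, hfx, smul_eq_mul]
    split_ifs <;> first | omega | simp [hθ.ne']
  · rw [Finset.sum_range_sub (fun j => x j) n]
    exact hdiff _ _

theorem exists_forall_tendsto_apply_of_norm_le {ι : Type*} (U : Ultrafilter ι)
    (φ : ι → StrongDual ℝ X) {C : ℝ} (hφ : ∀ i, ‖φ i‖ ≤ C) :
    ∃ g : StrongDual ℝ X, ∀ x, Tendsto (fun i => φ i x) U (𝓝 (g x)) := by
  obtain ⟨g, -, hg⟩ := (WeakDual.isCompact_closedBall (𝕜 := ℝ) (E := X) 0 C).ultrafilter_le_nhds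
    (U.map fun i => StrongDual.toWeakDual (φ i))
    (le_principal_iff.2 (mem_map.2 (univ_mem' fun i => by simpa using hφ i)))
  exact ⟨WeakDual.toStrongDual g, fun x => ((WeakDual.eval_continuous x).tendsto g).comp hg⟩

theorem iterated_limits_eq_of_surjective_inclusionInDoubleDual
    (hX : Function.Surjective (inclusionInDoubleDual ℝ X)) {y : ℕ → X}
    {φ : ℕ → StrongDual ℝ X} {A B : ℝ} (hy : ∀ n, ‖y n‖ ≤ A) (hφ : ∀ m, ‖φ m‖ ≤ B)
    {a b : ℕ → ℝ} {α β : ℝ} (hrow : ∀ m, Tendsto (fun n => φ m (y n)) atTop (𝓝 (a m)))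
    (hcol : ∀ n, Tendsto (fun m => φ m (y n)) atTop (𝓝 (b n)))
    (ha : Tendsto a atTop (𝓝 α)) (hb : Tendsto b atTop (𝓝 β)) : α = β := by
  set U := hyperfilter ℕ
  have hU : (U : Filter ℕ) ≤ atTop := Nat.hyperfilter_le_atTop
  obtain ⟨Λ, hΛ⟩ := exists_forall_tendsto_apply_of_norm_le U
    (fun n => inclusionInDoubleDual ℝ X (y n)) fun n => (double_dual_bound ℝ X (y n)).trans (hy n)
  obtain ⟨x, rfl⟩ := hX Λ
  obtain ⟨g, hg⟩ := exists_forall_tendsto_apply_of_norm_le U φ hφ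
  have hax : ∀ m, a m = φ m x := fun m =>
    tendsto_nhds_unique ((hrow m).mono_left hU) (hΛ (φ m))
  have hbg : ∀ n, b n = g (y n) := fun n =>
    tendsto_nhds_unique ((hcol n).mono_left hU) (hg (y n))
  calc α = g x := tendsto_nhds_unique (ha.mono_left hU) ((hg x).congr fun m => (hax m).symm)
    _ = β := tendsto_nhds_unique ((hΛ g).congr fun n => (hbg n).symm) (hb.mono_left hU)

theorem tendsto_ite_lt_atTop_nhds_one (m : ℕ) :
    Tendsto (fun n => if m < n then (1 : ℝ) else 0) atTop (𝓝 1) :=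
  tendsto_const_nhds.congr' <| (eventually_gt_atTop m).mono fun _ h => (if_pos h).symm

theorem tendsto_ite_lt_atTop_nhds_zero (n : ℕ) :
    Tendsto (fun m => if m < n then (1 : ℝ) else 0) atTop (𝓝 0) :=
  tendsto_const_nhds.congr' <| (eventually_ge_atTop n).mono fun _ h => (if_neg h.not_gt).symm

theorem not_exists_bound_sum_range_of_surjective
    (hX : Function.Surjective (inclusionInDoubleDual ℝ X)) {e : ℕ → X}
    {f : ℕ → StrongDual ℝ X} {C : ℝ} (hf : ∀ j, ‖f j‖ ≤ C)
    (hbi : ∀ i j, f i (e j) = if i = j then 1 else 0) :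
    ¬ ∃ M : ℝ, ∀ n, ‖∑ i ∈ Finset.range n, e i‖ ≤ M := by
  rintro ⟨M, hM⟩
  have hpair : ∀ m n, f m (∑ i ∈ Finset.range n, e i) = if m < n then 1 else 0 := by
    simp [map_sum, hbi]
  refine one_ne_zero <| iterated_limits_eq_of_surjective_inclusionInDoubleDual hX hM hf
    (fun m => ?_) (fun n => ?_) tendsto_const_nhds tendsto_const_nhds
  · simpa only [hpair] using tendsto_ite_lt_atTop_nhds_one m
  · simpa only [hpair] using tendsto_ite_lt_atTop_nhds_zero n

theorem not_exists_bound_sum_range_dual_of_surjective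
    (hX : Function.Surjective (inclusionInDoubleDual ℝ X)) {e : ℕ → X}
    {f : ℕ → StrongDual ℝ X} {C : ℝ} (he : ∀ i, ‖e i‖ ≤ C)
    (hbi : ∀ i j, f i (e j) = if i = j then 1 else 0) :
    ¬ ∃ M : ℝ, ∀ n, ‖∑ i ∈ Finset.range n, f i‖ ≤ M := by
  rintro ⟨M, hM⟩
  have hpair : ∀ m n, (∑ i ∈ Finset.range m, f i) (e n) = if n < m then 1 else 0 := by
    simp [hbi]
  refine zero_ne_one <| iterated_limits_eq_of_surjective_inclusionInDoubleDual hX he hM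
    (fun m => ?_) (fun n => ?_) tendsto_const_nhds tendsto_const_nhds
  · simpa only [hpair] using tendsto_ite_lt_atTop_nhds_zero m
  · simpa only [hpair] using tendsto_ite_lt_atTop_nhds_one n

end Normed

/-- Every non-reflexive Banach space admits a bounded biorthogonal system with uniformly
bounded partial sums of one of the two sequences; conversely, in a reflexive Banach space
no bounded biorthogonal system has this property. -/
theorem nonreflexive_biorthogonal_system {X : Type*} [NormedAddCommGroup X]
    [NormedSpace ℝ X] [CompleteSpace X] :
    (¬ Function.Surjective (NormedSpace.inclusionInDoubleDual ℝ X) →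
      ∃ (e : ℕ → X) (f : ℕ → (X →L[ℝ] ℝ)) (C : ℝ),
        (∀ i, ‖e i‖ ≤ C) ∧ (∀ j, ‖f j‖ ≤ C) ∧
        (∀ i j, f i (e j) = if i = j then 1 else 0) ∧
        ((∃ M : ℝ, ∀ n, ‖∑ i ∈ Finset.range n, e i‖ ≤ M) ∨
          (∃ M : ℝ, ∀ n, ‖∑ i ∈ Finset.range n, f i‖ ≤ M))) ∧
    (Function.Surjective (NormedSpace.inclusionInDoubleDual ℝ X) →
      ∀ (e : ℕ → X) (f : ℕ → (X →L[ℝ] ℝ)) (C : ℝ),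
        (∀ i, ‖e i‖ ≤ C) → (∀ j, ‖f j‖ ≤ C) →
        (∀ i j, f i (e j) = if i = j then 1 else 0) →
        (¬ (∃ M : ℝ, ∀ n, ‖∑ i ∈ Finset.range n, e i‖ ≤ M) ∧
          ¬ (∃ M : ℝ, ∀ n, ‖∑ i ∈ Finset.range n, f i‖ ≤ M))) := by
  refine ⟨fun hX => ?_, fun hX e f C he hf hbi =>
    ⟨not_exists_bound_sum_range_of_surjective hX hf hbi,
      not_exists_bound_sum_range_dual_of_surjective hX he hbi⟩⟩
  obtain ⟨θ, B, x, f, hθ, hx, hf, hfx⟩ := exists_seq_apply_eq_ite_le_of_not_surjective hX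
  obtain ⟨e, g, C, he, hg, hbi, hsum⟩ := exists_biorthogonal_of_apply_eq_ite_le hθ hx hf hfx
  exact ⟨e, g, C, he, hg, hbi, Or.inl hsum⟩
end

section
/- A Banach space X is uniformly non-square if and only if its von Neumann–Jordan constant satisfies C_NJ(X) < 2. -/
section Aux

private lemma quad_bound (δ t A B : ℝ) (hδ0 : 0 < δ) (hδ : δ ≤ 1/2)
    (ht0 : 0 ≤ t) (ht1 : t ≤ 1) (hA0 : 0 ≤ A) (hA : A ≤ 2)
    (hB0 : 0 ≤ B) (hB : B ≤ 2 - 2*δ) :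
    ((1-t)+t*A)^2 + ((1-t)+t*B)^2 ≤ (4 - δ)*(1+t^2) := by
  have h1 : ((1-t)+t*A)^2 ≤ (1+t)^2 := by
    nlinarith [mul_nonneg (mul_nonneg ht0 (by linarith : (0:ℝ) ≤ 2 - A))
      (by nlinarith [mul_nonneg ht0 hA0] : (0:ℝ) ≤ 2 + t*A)]
  have h2 : ((1-t)+t*B)^2 ≤ (1+(1-2*δ)*t)^2 := by
    nlinarith [mul_nonneg (mul_nonneg ht0 (by linarith : (0:ℝ) ≤ 2 - 2*δ - B))
      (by nlinarith [mul_nonneg ht0 hB0] : (0:ℝ) ≤ 2 - t + t*(1-2*δ) + t*B)]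
  have key : (1+t)^2 + (1+(1-2*δ)*t)^2 ≤ (4 - δ)*(1+t^2) := by
    nlinarith [sq_nonneg ((2+2*(2-2*δ)-(2-2*δ)^2)*t - (2-2*δ)), sq_nonneg t,
      mul_nonneg ht0 hδ0.le, mul_nonneg (mul_nonneg ht0 ht0) hδ0.le, sq_nonneg (1-t),
      mul_nonneg hδ0.le hδ0.le]
  linarith

variable {X : Type*} [NormedAddCommGroup X] [NormedSpace ℝ X]

private lemma conv_bound (x u : X) (hx : ‖x‖ = 1) (t : ℝ) (ht0 : 0 ≤ t) (ht1 : t ≤ 1) :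
    ‖x + t • u‖ ≤ (1 - t) + t * ‖x + u‖ := by
  have h : x + t • u = (1-t) • x + t • (x + u) := by module
  calc ‖x + t • u‖ = ‖(1-t) • x + t • (x + u)‖ := by rw [h]
    _ ≤ ‖(1-t) • x‖ + ‖t • (x + u)‖ := norm_add_le _ _
    _ = (1 - t) + t * ‖x + u‖ := by
        rw [norm_smul, norm_smul, hx, Real.norm_eq_abs, Real.norm_eq_abs,
          abs_of_nonneg (by linarith), abs_of_nonneg ht0, mul_one]

private lemma unit_bound (δ : ℝ) (hδ0 : 0 < δ) (hδ : δ ≤ 1/2)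
    (hUNS : ∀ x y : X, ‖x‖ ≤ 1 → ‖y‖ ≤ 1 → 2 * (1 - δ) < ‖x - y‖ → ‖x + y‖ ≤ 2 * (1 - δ))
    (x u : X) (hx : ‖x‖ = 1) (hu : ‖u‖ = 1) (t : ℝ) (ht0 : 0 ≤ t) (ht1 : t ≤ 1) :
    ‖x + t • u‖ ^ 2 + ‖x - t • u‖ ^ 2 ≤ (4 - δ) * (1 + t ^ 2) := by
  have hA2 : ‖x + u‖ ≤ 2 := by
    calc ‖x + u‖ ≤ ‖x‖ + ‖u‖ := norm_add_le _ _
      _ = 2 := by rw [hx, hu]; norm_num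
  have hB2 : ‖x - u‖ ≤ 2 := by
    calc ‖x - u‖ ≤ ‖x‖ + ‖u‖ := norm_sub_le _ _
      _ = 2 := by rw [hx, hu]; norm_num
  have hplus : ‖x + t • u‖ ≤ (1 - t) + t * ‖x + u‖ := conv_bound x u hx t ht0 ht1
  have hminus : ‖x - t • u‖ ≤ (1 - t) + t * ‖x - u‖ := by
    have := conv_bound x (-u) hx t ht0 ht1
    simpa [smul_neg, sub_eq_add_neg] using this
  have hps : ‖x + t • u‖ ^ 2 ≤ ((1 - t) + t * ‖x + u‖) ^ 2 :=
    pow_le_pow_left₀ (norm_nonneg _) hplus 2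
  have hms : ‖x - t • u‖ ^ 2 ≤ ((1 - t) + t * ‖x - u‖) ^ 2 :=
    pow_le_pow_left₀ (norm_nonneg _) hminus 2
  rcases le_or_gt ‖x - u‖ (2 * (1 - δ)) with hc | hc
  · have := quad_bound δ t ‖x + u‖ ‖x - u‖ hδ0 hδ ht0 ht1 (norm_nonneg _) hA2
      (norm_nonneg _) (by linarith)
    linarith
  · have hAle : ‖x + u‖ ≤ 2 * (1 - δ) := hUNS x u hx.le hu.le hc
    have := quad_bound δ t ‖x - u‖ ‖x + u‖ hδ0 hδ ht0 ht1 (norm_nonneg _) hB2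
      (norm_nonneg _) (by linarith)
    linarith

private lemma upper_of_le (δ : ℝ) (hδ0 : 0 < δ) (hδ : δ ≤ 1/2)
    (hub : ∀ x u : X, ‖x‖ = 1 → ‖u‖ = 1 → ∀ t : ℝ, 0 ≤ t → t ≤ 1 →
      ‖x + t • u‖ ^ 2 + ‖x - t • u‖ ^ 2 ≤ (4 - δ) * (1 + t ^ 2))
    (x y : X) (hxy : ‖y‖ ≤ ‖x‖) :
    ‖x + y‖ ^ 2 + ‖x - y‖ ^ 2 ≤ (4 - δ) * (‖x‖ ^ 2 + ‖y‖ ^ 2) := by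
  by_cases hx0 : x = 0
  · have hy0 : y = 0 := by
      have : ‖y‖ ≤ 0 := by simpa [hx0] using hxy
      exact norm_le_zero_iff.mp this
    simp [hx0, hy0]
  by_cases hy0 : y = 0
  · have hxn : (0:ℝ) < ‖x‖ := norm_pos_iff.mpr hx0
    simp only [hy0, add_zero, sub_zero, norm_zero]
    nlinarith [sq_nonneg ‖x‖]
  · have hxn : (0:ℝ) < ‖x‖ := norm_pos_iff.mpr hx0
    have hyn : (0:ℝ) < ‖y‖ := norm_pos_iff.mpr hy0
    set t : ℝ := ‖y‖ / ‖x‖ with ht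
    have ht0 : 0 ≤ t := by positivity
    have ht1 : t ≤ 1 := by rw [ht, div_le_one hxn]; exact hxy
    have hx1 : ‖(‖x‖⁻¹ • x)‖ = 1 := by
      rw [norm_smul, Real.norm_eq_abs, abs_of_nonneg (by positivity), inv_mul_cancel₀ hxn.ne']
    have hu1 : ‖(‖y‖⁻¹ • y)‖ = 1 := by
      rw [norm_smul, Real.norm_eq_abs, abs_of_nonneg (by positivity), inv_mul_cancel₀ hyn.ne']
    have key := hub (‖x‖⁻¹ • x) (‖y‖⁻¹ • y) hx1 hu1 t ht0 ht1
    have hcoef : t * ‖y‖⁻¹ = ‖x‖⁻¹ := by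
      rw [ht]; field_simp
    have e1 : (‖x‖⁻¹ • x) + t • (‖y‖⁻¹ • y) = ‖x‖⁻¹ • (x + y) := by
      rw [smul_smul, hcoef, smul_add]
    have e2 : (‖x‖⁻¹ • x) - t • (‖y‖⁻¹ • y) = ‖x‖⁻¹ • (x - y) := by
      rw [smul_smul, hcoef, smul_sub]
    rw [e1, e2, norm_smul, norm_smul, Real.norm_eq_abs,
      abs_of_nonneg (by positivity : (0:ℝ) ≤ ‖x‖⁻¹)] at key
    have key2 := mul_le_mul_of_nonneg_right key (sq_nonneg ‖x‖)
    have h1 : ((‖x‖⁻¹ * ‖x + y‖) ^ 2 + (‖x‖⁻¹ * ‖x - y‖) ^ 2) * ‖x‖ ^ 2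
        = ‖x + y‖ ^ 2 + ‖x - y‖ ^ 2 := by
      field_simp
    have h2 : (4 - δ) * (1 + t ^ 2) * ‖x‖ ^ 2 = (4 - δ) * (‖x‖ ^ 2 + ‖y‖ ^ 2) := by
      rw [ht]; field_simp
    rw [h1, h2] at key2
    exact key2

/-- General upper bound from uniform non-squareness. -/
private lemma gen_upper (δ : ℝ) (hδ0 : 0 < δ) (hδ : δ ≤ 1/2)
    (hUNS : ∀ x y : X, ‖x‖ ≤ 1 → ‖y‖ ≤ 1 → 2 * (1 - δ) < ‖x - y‖ → ‖x + y‖ ≤ 2 * (1 - δ))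
    (x y : X) :
    ‖x + y‖ ^ 2 + ‖x - y‖ ^ 2 ≤ (4 - δ) * (‖x‖ ^ 2 + ‖y‖ ^ 2) := by
  have hub := unit_bound δ hδ0 hδ hUNS
  rcases le_total ‖y‖ ‖x‖ with h | h
  · exact upper_of_le δ hδ0 hδ hub x y h
  · have := upper_of_le δ hδ0 hδ hub y x h
    rw [add_comm y x, norm_sub_rev y x] at this
    linarith

end Aux

/-- A Banach space is uniformly non-square iff its von Neumann–Jordan constant is `< 2`. -/
theorem uniformlyNonSquare_iff_vonNeumannJordan_lt_two {X : Type*} [NormedAddCommGroup X]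
    [NormedSpace ℝ X] [CompleteSpace X] :
    (∃ δ > (0:ℝ), ∀ x y : X, ‖x‖ ≤ 1 → ‖y‖ ≤ 1 →
        2 * (1 - δ) < ‖x - y‖ → ‖x + y‖ ≤ 2 * (1 - δ)) ↔
    sInf {C : ℝ | 0 < C ∧ ∀ x y : X, 0 < ‖x‖ ^ 2 + ‖y‖ ^ 2 →
        (1 / C ≤ (‖x + y‖ ^ 2 + ‖x - y‖ ^ 2) / (2 * ‖x‖ ^ 2 + 2 * ‖y‖ ^ 2) ∧
          (‖x + y‖ ^ 2 + ‖x - y‖ ^ 2) / (2 * ‖x‖ ^ 2 + 2 * ‖y‖ ^ 2) ≤ C)} < 2 := by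
  set S : Set ℝ := {C : ℝ | 0 < C ∧ ∀ x y : X, 0 < ‖x‖ ^ 2 + ‖y‖ ^ 2 →
        (1 / C ≤ (‖x + y‖ ^ 2 + ‖x - y‖ ^ 2) / (2 * ‖x‖ ^ 2 + 2 * ‖y‖ ^ 2) ∧
          (‖x + y‖ ^ 2 + ‖x - y‖ ^ 2) / (2 * ‖x‖ ^ 2 + 2 * ‖y‖ ^ 2) ≤ C)} with hS
  have hbdd : BddBelow S := ⟨0, fun C hC => hC.1.le⟩
  have htwo : (2:ℝ) ∈ S := by
    refine ⟨by norm_num, fun x y hpos => ?_⟩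
    have hA : ‖x + y‖ ≤ ‖x‖ + ‖y‖ := norm_add_le _ _
    have hB : ‖x - y‖ ≤ ‖x‖ + ‖y‖ := norm_sub_le _ _
    have hx2 : 2 * ‖x‖ ≤ ‖x + y‖ + ‖x - y‖ := by
      have h : x + x = (x + y) + (x - y) := by abel
      calc 2 * ‖x‖ = ‖x + x‖ := by rw [← two_smul ℝ x, norm_smul]; simp
        _ = ‖(x + y) + (x - y)‖ := by rw [h]
        _ ≤ ‖x + y‖ + ‖x - y‖ := norm_add_le _ _
    have hy2 : 2 * ‖y‖ ≤ ‖x + y‖ + ‖x - y‖ := by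
      have h : y + y = (x + y) - (x - y) := by abel
      calc 2 * ‖y‖ = ‖y + y‖ := by rw [← two_smul ℝ y, norm_smul]; simp
        _ = ‖(x + y) - (x - y)‖ := by rw [h]
        _ ≤ ‖x + y‖ + ‖x - y‖ := norm_sub_le _ _
    have hden : (0:ℝ) < 2 * ‖x‖ ^ 2 + 2 * ‖y‖ ^ 2 := by linarith
    constructor
    · rw [div_le_div_iff₀ (by norm_num) hden]
      nlinarith [norm_nonneg (x+y), norm_nonneg (x-y), sq_nonneg (‖x+y‖ - ‖x-y‖)]
    · rw [div_le_iff₀ hden]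
      nlinarith [norm_nonneg x, norm_nonneg y, norm_nonneg (x+y), norm_nonneg (x-y),
        sq_nonneg (‖x‖ - ‖y‖)]
  constructor
  · rintro ⟨δ, hδ0, hUNS⟩
    set δ' : ℝ := min δ (1/2) with hδ'
    have hδ'0 : 0 < δ' := lt_min hδ0 (by norm_num)
    have hδ'h : δ' ≤ 1/2 := min_le_right _ _
    have hUNS' : ∀ x y : X, ‖x‖ ≤ 1 → ‖y‖ ≤ 1 →
        2 * (1 - δ') < ‖x - y‖ → ‖x + y‖ ≤ 2 * (1 - δ') := by
      intro x y hx hy h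
      have hδδ : δ' ≤ δ := min_le_left _ _
      have : 2 * (1 - δ) < ‖x - y‖ := by linarith
      have := hUNS x y hx hy this
      linarith
    have hup := gen_upper δ' hδ'0 hδ'h hUNS'
    have hCpos : (0:ℝ) < 2 - δ'/2 := by linarith
    have hCS : (2 - δ'/2) ∈ S := by
      refine ⟨hCpos, fun x y hpos => ?_⟩
      have hden : (0:ℝ) < 2 * ‖x‖ ^ 2 + 2 * ‖y‖ ^ 2 := by linarith
      constructor
      · -- lower bound via substitution u = x+y, v = x-y
        have h2 := hup (x + y) (x - y)
        have e1 : (x + y) + (x - y) = x + x := by abel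
        have e2 : (x + y) - (x - y) = y + y := by abel
        rw [e1, e2] at h2
        have hx2 : ‖x + x‖ = 2 * ‖x‖ := by rw [← two_smul ℝ x, norm_smul]; simp
        have hy2 : ‖y + y‖ = 2 * ‖y‖ := by rw [← two_smul ℝ y, norm_smul]; simp
        rw [hx2, hy2] at h2
        rw [div_le_div_iff₀ hCpos hden]
        nlinarith [h2, hδ'0.le]
      · rw [div_le_iff₀ hden]
        have := hup x y
        nlinarith [this]
    calc sInf S ≤ 2 - δ'/2 := csInf_le hbdd hCS
      _ < 2 := by linarith
  · intro h
    obtain ⟨C, hCS, hC2⟩ := (csInf_lt_iff hbdd ⟨2, htwo⟩).mp h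
    obtain ⟨hCpos, hCbd⟩ := hCS
    have hC2' : C / 2 < 1 := by linarith
    have hsq1 : Real.sqrt (C/2) < 1 := by
      rw [show (1:ℝ) = Real.sqrt 1 by simp]
      exact Real.sqrt_lt_sqrt (by positivity) hC2'
    have hsq0 : 0 ≤ Real.sqrt (C/2) := Real.sqrt_nonneg _
    have hsqsq : Real.sqrt (C/2) ^ 2 = C / 2 := Real.sq_sqrt (by positivity)
    refine ⟨1 - Real.sqrt (C/2), by linarith, fun x y hx hy hxy => ?_⟩
    have h2d : 2 * (1 - (1 - Real.sqrt (C/2))) = 2 * Real.sqrt (C/2) := by ring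
    rw [h2d] at hxy ⊢
    by_cases h0 : x = 0 ∧ y = 0
    · rw [h0.1, h0.2, sub_zero, norm_zero] at hxy
      linarith
    · have hpos : 0 < ‖x‖ ^ 2 + ‖y‖ ^ 2 := by
        rcases not_and_or.mp h0 with h' | h'
        · have := norm_pos_iff.mpr h'
          positivity
        · have := norm_pos_iff.mpr h'
          positivity
      have hbd := (hCbd x y hpos).2
      rw [div_le_iff₀ (by linarith)] at hbd
      have hx2 : ‖x‖ ^ 2 ≤ 1 := by nlinarith [norm_nonneg x]
      have hy2 : ‖y‖ ^ 2 ≤ 1 := by nlinarith [norm_nonneg y]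
      have hS4 : ‖x + y‖ ^ 2 + ‖x - y‖ ^ 2 ≤ 4 * C := by nlinarith [hCpos.le]
      have h2s : (2 * Real.sqrt (C/2)) ^ 2 = 2 * C := by
        rw [mul_pow, hsqsq]; ring
      have hxy2 : 2 * C < ‖x - y‖ ^ 2 := by
        rw [← h2s]
        exact pow_lt_pow_left₀ hxy (by positivity) (by norm_num)
      nlinarith [norm_nonneg (x + y), hsq0, hsqsq]
end
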